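/- The map Q_p : (u_1, ..., u_p) ↦ (u_1+u_2, u_2+u_3, ..., u_{p−1}+u_p) satisfies dQ_p · Ω^{p̃k}_p · (dQ_p)^T = Ω^{pk}_{p−1}, and hence is a Poisson map: for differentiable f, g on ℝ^{p−1}, {f∘Q_p, g∘Q_p}_u = {f,g}_c at c = Q_p(u). -/

import Mathlib

/-!
`Q_p` is the linear map `u ↦ dQ_p u`, so by the chain rule `∇(f ∘ Q_p) = (dQ_p)ᵀ ∇f`, and any bracket
`{·,·}_Ω` pulls back along `Q_p` to the bracket of the congruent matrix `dQ_p Ω (dQ_p)ᵀ`.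
For the matrix identity, row `i` of `dQ_p Ω^{p̃k}` is the sum of rows `i` and `i+1` of `Ω^{p̃k}`;
since `Ω^{p̃k}_{ab} = ∓(-1)^{a+b}` for `a ≶ b`, consecutive rows cancel except near the diagonal,
leaving `e_{i+1} - e_i`, and multiplying by `(dQ_p)ᵀ` produces the tridiagonal `Ω^{pk}`.
-/

open Matrix

/-- Poisson-type bracket associated with a matrix `Ω`:
`{f,g} = ∇f · Ω · (∇g)ᵀ = Σ_{i,j} Ω_{ij} ∂f/∂x_i ∂g/∂x_j`. -/
noncomputable def gradBracket {m : ℕ} (Ω : Matrix (Fin m) (Fin m) ℝ)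
    (g h : (Fin m → ℝ) → ℝ) (x : Fin m → ℝ) : ℝ :=
  ∑ i, ∑ j, Ω i j * fderiv ℝ g x (Pi.single i 1) * fderiv ℝ h x (Pi.single j 1)

/-- `Q_p : (u_1, …, u_p) ↦ (u_1+u_2, …, u_{p−1}+u_p)` (here with `p` replaced by `p+1`). -/
def Qmap (p : ℕ) (u : Fin (p + 1) → ℝ) (i : Fin p) : ℝ := u i.castSucc + u i.succ

/-- `Ω^{p̃k}_p`: constant antisymmetric matrix with `(i,j)`-entry `(−1)^{j−i+1}` for `j > i`. -/
noncomputable def OmegaPKtilde (p : ℕ) : Matrix (Fin p) (Fin p) ℝ := fun i j =>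
  if (i : ℕ) < j then (-1 : ℝ) ^ ((j : ℕ) - i + 1)
  else if (j : ℕ) < i then -((-1 : ℝ) ^ ((i : ℕ) - j + 1))
  else 0

/-- `Ω^{pk}_p`: constant antisymmetric tridiagonal matrix with superdiagonal `+1`. -/
def OmegaPK (p : ℕ) : Matrix (Fin p) (Fin p) ℝ := fun i j =>
  if (j : ℕ) = (i : ℕ) + 1 then 1 else if (i : ℕ) = (j : ℕ) + 1 then -1 else 0

/-- The (constant) Jacobian matrix of `Q_p`. -/
def dQmap (p : ℕ) : Matrix (Fin p) (Fin (p + 1)) ℝ := fun i j =>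
  if j = i.castSucc ∨ j = i.succ then 1 else 0

section DQmap

variable {p : ℕ}

lemma dQmap_row (i : Fin p) : dQmap p i = Pi.single i.castSucc 1 + Pi.single i.succ 1 := by
  ext a
  have hne : i.castSucc ≠ i.succ := Fin.castSucc_lt_succ.ne
  by_cases h₁ : a = i.castSucc <;> by_cases h₂ : a = i.succ <;>
    simp_all [dQmap, hne.symm]

lemma dQmap_mulVec (u : Fin (p + 1) → ℝ) : dQmap p *ᵥ u = Qmap p u := by
  ext i
  change dQmap p i ⬝ᵥ u = _
  rw [dQmap_row, add_dotProduct, single_one_dotProduct, single_one_dotProduct, Qmap]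

lemma dQmap_mul_apply {n : Type*} (M : Matrix (Fin (p + 1)) n ℝ) (i : Fin p) (b : n) :
    (dQmap p * M) i b = M i.castSucc b + M i.succ b := by
  change dQmap p i ⬝ᵥ (fun a => M a b) = _
  rw [dQmap_row, add_dotProduct, single_one_dotProduct, single_one_dotProduct]

lemma mul_dQmap_transpose_apply {m : Type*} (M : Matrix m (Fin (p + 1)) ℝ) (i : m) (j : Fin p) :
    (M * (dQmap p)ᵀ) i j = M i j.castSucc + M i j.succ := by
  change M i ⬝ᵥ dQmap p j = _
  rw [dQmap_row, dotProduct_add, dotProduct_single_one, dotProduct_single_one]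

end DQmap

noncomputable def altSign (a b : ℕ) : ℝ :=
  if a < b then (-1 : ℝ) ^ (b - a + 1) else if b < a then -((-1 : ℝ) ^ (a - b + 1)) else 0

lemma neg_one_pow_sub_add_one {a b : ℕ} (h : a ≤ b) :
    (-1 : ℝ) ^ (b - a + 1) = -(-1) ^ (a + b) := by
  obtain ⟨k, rfl⟩ := Nat.exists_eq_add_of_le h
  rw [Nat.add_sub_cancel_left, pow_succ, ← add_assoc, pow_add, ← two_mul, pow_mul]
  simp

lemma altSign_eq (a b : ℕ) :
    altSign a b = if a < b then -(-1) ^ (a + b) else if b < a then (-1) ^ (a + b) else 0 := by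
  unfold altSign
  split_ifs with h1 h2
  · exact neg_one_pow_sub_add_one h1.le
  · rw [neg_one_pow_sub_add_one h2.le, neg_neg, add_comm]
  · rfl

lemma altSign_add_altSign_succ (a b : ℕ) :
    altSign a b + altSign (a + 1) b = if b = a + 1 then 1 else if b = a then -1 else 0 := by
  rw [altSign_eq, altSign_eq, add_right_comm, pow_succ]
  split_ifs <;> first | omega | (subst_vars; simp [← two_mul, pow_add, pow_mul, ← mul_pow])

lemma OmegaPKtilde_apply {n : ℕ} (a b : Fin n) : OmegaPKtilde n a b = altSign a b := rfl

theorem dQmap_mul_OmegaPKtilde_mul_transpose (p : ℕ) :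
    dQmap p * OmegaPKtilde (p + 1) * (dQmap p)ᵀ = OmegaPK p := by
  ext i j
  rw [mul_dQmap_transpose_apply, dQmap_mul_apply, dQmap_mul_apply]
  simp only [OmegaPKtilde_apply, Fin.val_castSucc, Fin.val_succ, altSign_add_altSign_succ,
    OmegaPK]
  split_ifs <;> first | omega | norm_num

section Bracket

variable {m n : ℕ}

noncomputable def partialDerivs (f : (Fin m → ℝ) → ℝ) (x : Fin m → ℝ) : Fin m → ℝ :=
  fun i => fderiv ℝ f x (Pi.single i 1)

lemma ContinuousLinearMap.apply_eq_dotProduct (ℓ : (Fin m → ℝ) →L[ℝ] ℝ) (v : Fin m → ℝ) :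
    ℓ v = v ⬝ᵥ fun i => ℓ (Pi.single i 1) := by
  conv_lhs => rw [← Finset.univ_sum_single v]
  simp only [map_sum, dotProduct]
  refine Finset.sum_congr rfl fun i _ => ?_
  rw [← smul_eq_mul, ← map_smul, ← Pi.single_smul', smul_eq_mul, mul_one]

lemma gradBracket_eq_dotProduct (Ω : Matrix (Fin m) (Fin m) ℝ) (f g : (Fin m → ℝ) → ℝ)
    (x : Fin m → ℝ) :
    gradBracket Ω f g x = partialDerivs f x ⬝ᵥ (Ω *ᵥ partialDerivs g x) := by
  simp only [gradBracket, partialDerivs, dotProduct, mulVec, Finset.mul_sum]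
  exact Finset.sum_congr rfl fun i _ => Finset.sum_congr rfl fun j _ => by ring

lemma partialDerivs_comp_mulVec (A : Matrix (Fin n) (Fin m) ℝ) {f : (Fin n → ℝ) → ℝ}
    {u : Fin m → ℝ} (hf : DifferentiableAt ℝ f (A *ᵥ u)) :
    partialDerivs (fun v => f (A *ᵥ v)) u = Aᵀ *ᵥ partialDerivs f (A *ᵥ u) := by
  let L : (Fin m → ℝ) →L[ℝ] (Fin n → ℝ) := LinearMap.toContinuousLinearMap (Matrix.toLin' A)
  have hL : ∀ v, L v = A *ᵥ v := fun v => rfl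
  have hcomp : (fun v => f (A *ᵥ v)) = f ∘ L := rfl
  ext a
  rw [partialDerivs, hcomp, fderiv_comp u (hL u ▸ hf) L.differentiableAt, L.fderiv,
    ContinuousLinearMap.comp_apply, hL, hL, mulVec_single_one,
    ContinuousLinearMap.apply_eq_dotProduct]
  rfl

theorem gradBracket_comp_mulVec (A : Matrix (Fin n) (Fin m) ℝ) (Ω : Matrix (Fin m) (Fin m) ℝ)
    {f g : (Fin n → ℝ) → ℝ} {u : Fin m → ℝ} (hf : DifferentiableAt ℝ f (A *ᵥ u))
    (hg : DifferentiableAt ℝ g (A *ᵥ u)) :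
    gradBracket Ω (fun v => f (A *ᵥ v)) (fun v => g (A *ᵥ v)) u =
      gradBracket (A * Ω * Aᵀ) f g (A *ᵥ u) := by
  rw [gradBracket_eq_dotProduct, gradBracket_eq_dotProduct, partialDerivs_comp_mulVec A hf,
    partialDerivs_comp_mulVec A hg, mulVec_transpose, ← dotProduct_mulVec, mulVec_mulVec,
    mulVec_mulVec]

end Bracket

/-- `Q_p` satisfies `dQ_p · Ω^{p̃k}_p · (dQ_p)ᵀ = Ω^{pk}_{p−1}`, hence is a Poisson map:
`{f∘Q_p, g∘Q_p}_u = {f,g}_c` at `c = Q_p(u)`. -/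
theorem Qmap_poisson (p : ℕ) (u : Fin (p + 1) → ℝ) (f g : (Fin p → ℝ) → ℝ)
    (hf : DifferentiableAt ℝ f (Qmap p u)) (hg : DifferentiableAt ℝ g (Qmap p u)) :
    dQmap p * OmegaPKtilde (p + 1) * (dQmap p)ᵀ = OmegaPK p ∧
    gradBracket (OmegaPKtilde (p + 1)) (fun v => f (Qmap p v)) (fun v => g (Qmap p v)) u =
      gradBracket (OmegaPK p) f g (Qmap p u) := by
  have hΩ := dQmap_mul_OmegaPKtilde_mul_transpose p
  refine ⟨hΩ, ?_⟩
  simp only [← dQmap_mulVec] at hf hg ⊢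
  rw [gradBracket_comp_mulVec _ _ hf hg, hΩ]
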